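/- arXiv:1906.01541 — 2 statements merged into one kernel-verified Lean document; each statement's English description precedes it below -/
import Mathlib

section
/- If a dual graph with m edges and k squares corresponds to a Tangle of class c = m - 2k + 1, and if every dual graph with k squares has at least 2k + 2√k edges, then c ≥ √(2m+1), equivalently m ≤ (c² - 1)/2. -/
/-- If a dual graph with `m` edges and `k` squares corresponds to a Tangle of
class `c = m - 2k + 1`, and `m ≥ 2k + 2√k`, then `c ≥ √(2m + 1)`,
equivalently `m ≤ (c² - 1)/2`. -/
theorem stmt_3 (m k : ℕ) (c : ℤ) (hc : c = (m : ℤ) - 2 * k + 1)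
    (hedges : (2 * k : ℝ) + 2 * Real.sqrt k ≤ m) :
    Real.sqrt (2 * m + 1) ≤ (c : ℝ) ∧ (m : ℝ) ≤ ((c : ℝ) ^ 2 - 1) / 2 := by
  have hs0 : (0:ℝ) ≤ Real.sqrt k := Real.sqrt_nonneg _
  have hs : Real.sqrt k ^ 2 = (k:ℝ) := Real.sq_sqrt (by positivity)
  have hcr : (c:ℝ) = (m:ℝ) - 2 * k + 1 := by
    rw [hc]; push_cast; ring
  have hc0 : (0:ℝ) ≤ (c:ℝ) := by nlinarith
  have hkey : (2 * (m:ℝ) + 1) ≤ (c:ℝ)^2 := by nlinarith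
  constructor
  · calc Real.sqrt (2 * m + 1) ≤ Real.sqrt ((c:ℝ)^2) := Real.sqrt_le_sqrt hkey
      _ = (c:ℝ) := Real.sqrt_sq hc0
  · linarith
end

section
/- Let (a(m)) be a sequence of positive reals that is log-superadditive (a(m₁)a(m₂) ≤ a(m₁+m₂)) and satisfies b(m+1) ≤ a(m) ≤ b(2m+1) for a sequence b with lim b(m)^(1/m) = κ_p ≥ 1. Then κ = lim_{m→∞} a(m)^(1/m) exists and κ_p ≤ κ ≤ κ_p². -/
open Filter

private lemma log_div_tendsto (b : ℕ → ℝ) (κp : ℝ) (hbpos : ∀ m, 0 < b m)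
    (hlim : Tendsto (fun m : ℕ => b m ^ (1 / (m : ℝ))) atTop (nhds κp))
    (hκp : 1 ≤ κp) :
    Tendsto (fun m : ℕ => Real.log (b m) / (m : ℝ)) atTop (nhds (Real.log κp)) := by
  have h := hlim.log (by positivity)
  refine h.congr fun m => ?_
  rw [Real.log_rpow (hbpos m)]
  ring

private lemma shifted_tendsto (b : ℕ → ℝ) (κp : ℝ) (hbpos : ∀ m, 0 < b m)
    (hlim : Tendsto (fun m : ℕ => b m ^ (1 / (m : ℝ))) atTop (nhds κp))
    (hκp : 1 ≤ κp) (c : ℕ) (hc : 1 ≤ c) :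
    Tendsto (fun m : ℕ => Real.log (b (c * m + 1)) / (m : ℝ)) atTop
      (nhds ((c : ℝ) * Real.log κp)) := by
  have hL := log_div_tendsto b κp hbpos hlim hκp
  have hcomp : Tendsto (fun m : ℕ => c * m + 1) atTop atTop := by
    refine tendsto_atTop_mono (fun m => ?_) tendsto_id
    have := Nat.mul_le_mul_right m hc
    simpa using by omega
  have h1 : Tendsto (fun m : ℕ => Real.log (b (c * m + 1)) / ((c * m + 1 : ℕ) : ℝ)) atTop
      (nhds (Real.log κp)) := hL.comp hcomp
  have h2 : Tendsto (fun m : ℕ => ((c * m + 1 : ℕ) : ℝ) / (m : ℝ)) atTop (nhds (c : ℝ)) := by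
    have : Tendsto (fun m : ℕ => (c : ℝ) + 1 / (m : ℝ)) atTop (nhds ((c : ℝ) + 0)) :=
      tendsto_const_nhds.add tendsto_one_div_atTop_nhds_zero_nat
    rw [add_zero] at this
    refine this.congr' ?_
    filter_upwards [eventually_gt_atTop 0] with m hm
    have hm' : (m : ℝ) ≠ 0 := Nat.cast_ne_zero.mpr (by omega)
    push_cast
    field_simp
  have := h2.mul h1
  refine this.congr' ?_
  filter_upwards [eventually_gt_atTop 0] with m hm
  have hm' : (m : ℝ) ≠ 0 := Nat.cast_ne_zero.mpr (by omega)
  have hcm : ((c * m + 1 : ℕ) : ℝ) ≠ 0 := Nat.cast_ne_zero.mpr (by omega)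
  field_simp

private lemma rpow_tendsto (b : ℕ → ℝ) (κp : ℝ) (hbpos : ∀ m, 0 < b m)
    (hlim : Tendsto (fun m : ℕ => b m ^ (1 / (m : ℝ))) atTop (nhds κp))
    (hκp : 1 ≤ κp) (c : ℕ) (hc : 1 ≤ c) :
    Tendsto (fun m : ℕ => b (c * m + 1) ^ (1 / (m : ℝ))) atTop (nhds (κp ^ c)) := by
  have h := (shifted_tendsto b κp hbpos hlim hκp c hc).rexp
  have hκp' : (0 : ℝ) < κp := lt_of_lt_of_le one_pos hκp
  have heq : Real.exp ((c : ℝ) * Real.log κp) = κp ^ c := by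
    rw [← Real.rpow_natCast κp c, Real.rpow_def_of_pos hκp', mul_comm]
  rw [heq] at h
  refine h.congr fun m => ?_
  rw [Real.rpow_def_of_pos (hbpos _)]
  congr 1
  ring

/-- If `a` is log-superadditive and sandwiched as `b(m+1) ≤ a(m) ≤ b(2m+1)`
with `b(m)^(1/m) → κ_p ≥ 1`, then `κ = lim a(m)^(1/m)` exists and
`κ_p ≤ κ ≤ κ_p²`. -/
theorem stmt_8 (a b : ℕ → ℝ) (κp : ℝ)
    (hapos : ∀ m, 0 < a m) (hbpos : ∀ m, 0 < b m)
    (hsuper : ∀ m₁ m₂ : ℕ, 1 ≤ m₁ → 1 ≤ m₂ → a m₁ * a m₂ ≤ a (m₁ + m₂))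
    (hsand : ∀ m : ℕ, 1 ≤ m → b (m + 1) ≤ a m ∧ a m ≤ b (2 * m + 1))
    (hlim : Tendsto (fun m : ℕ => b m ^ (1 / (m : ℝ))) atTop (nhds κp))
    (hκp : 1 ≤ κp) :
    ∃ κ : ℝ, Tendsto (fun m : ℕ => a m ^ (1 / (m : ℝ))) atTop (nhds κ) ∧
      κp ≤ κ ∧ κ ≤ κp ^ 2 := by
  set u : ℕ → ℝ := fun n => if n = 0 then 0 else -Real.log (a n) with hu
  have hsub : Subadditive u := by
    intro m n
    have h0 : u 0 = 0 := by simp [hu]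
    rcases Nat.eq_zero_or_pos m with hm | hm
    · subst hm; simp [h0]
    rcases Nat.eq_zero_or_pos n with hn | hn
    · subst hn; simp [h0]
    simp only [hu]
    rw [if_neg (by omega), if_neg (by omega), if_neg (by omega)]
    have := hsuper m n hm hn
    have hlog : Real.log (a m) + Real.log (a n) ≤ Real.log (a (m + n)) := by
      rw [← Real.log_mul (hapos m).ne' (hapos n).ne']
      exact Real.log_le_log (mul_pos (hapos m) (hapos n)) this
    linarith
  -- upper bound sequence for -log a n / n
  have hhi := shifted_tendsto b κp hbpos hlim hκp 2 (by norm_num)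
  have hbdd : BddBelow (Set.range fun n : ℕ => u n / (n : ℝ)) := by
    have hbd : BddAbove (Set.range fun n : ℕ => Real.log (b (2 * n + 1)) / (n : ℝ)) :=
      hhi.bddAbove_range
    obtain ⟨C, hC⟩ := hbd
    refine ⟨min (-C) 0, ?_⟩
    rintro x ⟨n, rfl⟩
    rcases Nat.eq_zero_or_pos n with hn | hn
    · subst hn; simp [hu]
    have hun : u n = -Real.log (a n) := by simp [hu, Nat.one_le_iff_ne_zero.mp hn]
    have hle : Real.log (a n) ≤ Real.log (b (2 * n + 1)) :=
      Real.log_le_log (hapos n) (hsand n hn).2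
    have hCn : Real.log (b (2 * n + 1)) / (n : ℝ) ≤ C := hC ⟨n, rfl⟩
    have hnpos : (0 : ℝ) < n := Nat.cast_pos.mpr hn
    have h3 : Real.log (a n) / (n : ℝ) ≤ Real.log (b (2 * n + 1)) / (n : ℝ) := by gcongr
    have : -C ≤ -Real.log (a n) / (n : ℝ) := by
      rw [neg_div, neg_le_neg_iff]
      exact h3.trans hCn
    calc min (-C) 0 ≤ -C := min_le_left _ _
      _ ≤ u n / (n : ℝ) := by rw [hun]; exact this
  have htend := hsub.tendsto_lim hbdd
  set L := hsub.lim
  refine ⟨Real.exp (-L), ?_, ?_, ?_⟩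
  · have h := (htend.neg).rexp
    refine h.congr' ?_
    filter_upwards [eventually_gt_atTop 0] with m hm
    have hum : u m = -Real.log (a m) := by simp [hu, Nat.one_le_iff_ne_zero.mp hm]
    rw [hum, Real.rpow_def_of_pos (hapos m)]
    congr 1
    field_simp
  · have hlo := rpow_tendsto b κp hbpos hlim hκp 1 le_rfl
    simp only [pow_one, one_mul] at hlo
    have hmain : Tendsto (fun m : ℕ => a m ^ (1 / (m : ℝ))) atTop (nhds (Real.exp (-L))) := by
      have h := (htend.neg).rexp
      refine h.congr' ?_
      filter_upwards [eventually_gt_atTop 0] with m hm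
      have hum : u m = -Real.log (a m) := by simp [hu, Nat.one_le_iff_ne_zero.mp hm]
      rw [hum, Real.rpow_def_of_pos (hapos m)]
      congr 1
      field_simp
    refine le_of_tendsto_of_tendsto hlo hmain ?_
    filter_upwards [eventually_gt_atTop 0] with m hm
    exact Real.rpow_le_rpow (hbpos _).le (hsand m hm).1 (by positivity)
  · have hhi2 := rpow_tendsto b κp hbpos hlim hκp 2 (by norm_num)
    have hmain : Tendsto (fun m : ℕ => a m ^ (1 / (m : ℝ))) atTop (nhds (Real.exp (-L))) := by
      have h := (htend.neg).rexp
      refine h.congr' ?_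
      filter_upwards [eventually_gt_atTop 0] with m hm
      have hum : u m = -Real.log (a m) := by simp [hu, Nat.one_le_iff_ne_zero.mp hm]
      rw [hum, Real.rpow_def_of_pos (hapos m)]
      congr 1
      field_simp
    refine le_of_tendsto_of_tendsto hmain hhi2 ?_
    filter_upwards [eventually_gt_atTop 0] with m hm
    exact Real.rpow_le_rpow (hapos _).le (hsand m hm).2 (by positivity)
end
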